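/- For every n ∈ ℕ, every δ ∈ (0,1), and every integer s with 8·ln(4/δ) < s ≤ n, the mechanism C_s is (ε, δ/2)-differentially private with ε = √(32·ln(4/δ)/s) · (1 − s/n): for all x, x' ∈ {0,1}^n differing in at most one coordinate and every set W ⊆ {0,1,…,n}, Pr[C_s(x) ∈ W] ≤ exp(√(32·ln(4/δ)/s) · (1 − s/n)) · Pr[C_s(x') ∈ W] + δ/2. -/

import Mathlib

open scoped ENNReal Classical

noncomputable section

namespace ShuffledDP

universe u v w

lemma half_le_one : (2⁻¹ : ℝ≥0∞) ≤ 1 := by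
  simp [ENNReal.inv_le_one]

/-- Independent samples from a finite family of PMFs, collected (in order) as a list. -/
noncomputable def indep {α : Type u} : (n : ℕ) → (Fin n → PMF α) → PMF (List α)
  | 0, _ => PMF.pure []
  | n + 1, f =>
      (f 0).bind fun y => (indep n fun i => f i.succ).bind fun ys => PMF.pure (y :: ys)

/-- `(ε, δ)`-differential privacy of a mechanism `M` with respect to a
neighboring relation `nbr` on inputs. -/
def DPFor {I : Type u} {Z : Type v} (nbr : I → I → Prop) (M : I → PMF Z) (ε δ : ℝ) : Prop :=
  ∀ x x', nbr x x' → ∀ T : Set Z,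
    (M x).toOuterMeasure T ≤
      ENNReal.ofReal (Real.exp ε) * (M x').toOuterMeasure T + ENNReal.ofReal δ

/-- Two datasets are neighbors if they differ in at most one coordinate. -/
def Neighbor {n : ℕ} {X : Type u} (x x' : Fin n → X) : Prop :=
  ∃ j, ∀ i, i ≠ j → x i = x' i

/-- The randomized-response local randomizer `R_{n,λ}`: output the input bit with
probability `1 - λ/n` and a uniformly random bit with probability `λ/n`. -/
noncomputable def rr (n : ℕ) (lam : ℝ) (x : Bool) : PMF Bool :=
  (PMF.bernoulli (min (ENNReal.ofReal (lam / n)) 1).toNNReal (by simpa using ENNReal.toNNReal_mono ENNReal.one_ne_top (min_le_right _ _))).bind fun b =>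
    if b then PMF.bernoulli (2⁻¹ : ℝ≥0∞).toNNReal (by simpa using ENNReal.toNNReal_mono ENNReal.one_ne_top (half_le_one)) else PMF.pure x

/-- Binomial distribution, valued in `ℕ`. -/
noncomputable def binom (p : ℝ≥0∞) (h : p ≤ 1) (m : ℕ) : PMF ℕ :=
  (PMF.binomial p.toNNReal (by simpa using ENNReal.toNNReal_mono ENNReal.one_ne_top (h)) m).map Fin.val

/-- Uniform distribution over the subsets of `Fin n` of size `s`. -/
noncomputable def uniformSubset (n s : ℕ) : PMF (Finset (Fin n)) :=
  if h : ((Finset.univ : Finset (Fin n)).powersetCard s).Nonempty then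
    PMF.uniformOfFinset _ h
  else PMF.pure ∅

/-- `∑_{i ∉ H} x_i` for a boolean dataset `x`. -/
def sumOutside {n : ℕ} (H : Finset (Fin n)) (x : Fin n → Bool) : ℕ :=
  ∑ i ∈ Hᶜ, (if x i then 1 else 0)

/-- The mechanism `C_H`: output `∑_{i ∉ H} x_i + B` with `B ~ Bin(|H|, 1/2)`. -/
noncomputable def CH (n : ℕ) (H : Finset (Fin n)) (x : Fin n → Bool) : PMF ℕ :=
  (binom 2⁻¹ half_le_one H.card).map fun B => sumOutside H x + B

/-- The mechanism `C_s`: sample `H` uniformly among size-`s` subsets, then run `C_H`. -/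
noncomputable def Cs (n s : ℕ) (x : Fin n → Bool) : PMF ℕ :=
  (uniformSubset n s).bind fun H => CH n H x

/-- The mechanism `C_λ`: sample `s ~ Bin(n, λ/n)`, then run `C_s`. -/
noncomputable def Cmech (n : ℕ) (lam : ℝ) (x : Fin n → Bool) : PMF ℕ :=
  (binom (min (ENNReal.ofReal (lam / n)) 1) (min_le_right _ _) n).bind fun s => Cs n s x

/-- The shuffled bit-sum mechanism `Π_{n,λ}`: the random multiset `{y_1, …, y_n}`
of the outputs `y_i ~ R_{n,λ}(x_i)`. -/
noncomputable def shuffleBit (n : ℕ) (lam : ℝ) (x : Fin n → Bool) : PMF (Multiset Bool) :=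
  (indep n fun i => rr n lam (x i)).map fun l => (l : Multiset Bool)

/-- The bit-sum protocol output `P_{n,λ}(x) = (n/(n-λ)) (∑ y_i - λ/2)`. -/
noncomputable def bitSumOutput (n : ℕ) (lam : ℝ) (x : Fin n → Bool) : PMF ℝ :=
  (indep n fun i => rr n lam (x i)).map fun l =>
    ((n : ℝ) / (n - lam)) * ((l.count true : ℝ) - lam / 2)

/-- The randomized-rounding encoder `E_r`. -/
noncomputable def encoder (r : ℕ) (x : ℝ) : PMF (Fin r → Bool) :=
  (PMF.bernoulli (min (ENNReal.ofReal (x * r - ⌈x * r⌉ + 1)) 1).toNNReal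
      (by simpa using ENNReal.toNNReal_mono ENNReal.one_ne_top (min_le_right _ _))).map
    fun b i => if ((i : ℕ) : ℤ) + 1 < ⌈x * r⌉ then true
      else if ((i : ℕ) : ℤ) + 1 = ⌈x * r⌉ then b else false

/-- The real-sum shuffled mechanism `Π^ℝ_{n,λ,r}`: the random multiset of all `n·r`
bits `y_{i,j} ~ R_{n,λ}(b_{i,j})` where `(b_{i,1},…,b_{i,r}) = E_r(x_i)`. -/
noncomputable def realShuffle (n : ℕ) (lam : ℝ) (r : ℕ) (X : Fin n → ℝ) :
    PMF (Multiset Bool) :=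
  (indep n fun i =>
      (encoder r (X i)).bind fun b =>
        (indep r fun j => rr n lam (b j)).map fun l => (l : Multiset Bool)).map
    fun ms => ms.sum

/-- The real-sum protocol output `z = (1/r)(n/(n-λ)) (∑_{i,j} y_{i,j} - λ r/2)`. -/
noncomputable def realOutput (n : ℕ) (lam : ℝ) (r : ℕ) (X : Fin n → ℝ) : PMF ℝ :=
  (realShuffle n lam r X).map fun m =>
    (1 / (r : ℝ)) * ((n : ℝ) / (n - lam)) * ((m.count true : ℝ) - lam * r / 2)

/-- The shuffled mechanism associated with a randomizer producing a multiset of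
messages: the union (multiset sum) of the `n` users' message multisets. -/
noncomputable def shuffM {𝒳 : Type u} {𝒴 : Type v} (n : ℕ) (R : 𝒳 → PMF (Multiset 𝒴))
    (x : Fin n → 𝒳) : PMF (Multiset 𝒴) :=
  (indep n fun i => R (x i)).map fun l => l.sum

/-- The multiset of the `m` messages output by an `m`-message randomizer. -/
noncomputable def vecR {𝒳 : Type u} {𝒴 : Type v} {m : ℕ} (R : 𝒳 → PMF (Fin m → 𝒴)) :
    𝒳 → PMF (Multiset 𝒴) :=
  fun a => (R a).map fun v => ((List.ofFn v : List 𝒴) : Multiset 𝒴)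

/-- The one-message shuffled mechanism `Π_R`: the random multiset `{R(x_1), …, R(x_n)}`. -/
noncomputable def shuffle1 {𝒳 : Type u} {𝒴 : Type v} (n : ℕ) (R : 𝒳 → PMF 𝒴)
    (x : Fin n → 𝒳) : PMF (Multiset 𝒴) :=
  (indep n fun i => R (x i)).map fun l => (l : Multiset 𝒴)

/-- `(ε, δ)`-differential privacy of a local randomizer (any two inputs are neighbors). -/
def RandDP {𝒳 : Type u} {𝒴 : Type v} (R : 𝒳 → PMF 𝒴) (ε δ : ℝ) : Prop :=
  ∀ x x' : 𝒳, ∀ T : Set 𝒴,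
    (R x).toOuterMeasure T ≤
      ENNReal.ofReal (Real.exp ε) * (R x').toOuterMeasure T + ENNReal.ofReal δ

/-- The output of the local protocol `(R, A)`. -/
noncomputable def localOut {𝒳 : Type u} {𝒴 : Type v} {𝒵 : Type w} (n : ℕ)
    (R : 𝒳 → PMF 𝒴) (A : List 𝒴 → 𝒵) (X : Fin n → 𝒳) : PMF 𝒵 :=
  (indep n fun i => R (X i)).map A

/-- `(a, b)`-accuracy of a protocol `P` for a function `f` w.r.t. a distance `d`. -/
def AccFor {I : Type u} {𝒵 : Type w} (P : I → PMF 𝒵) (f : I → 𝒵) (d : 𝒵 → 𝒵 → ℝ)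
    (a b : ℝ) : Prop :=
  ∀ X, ENNReal.ofReal (1 - b) ≤ (P X).toOuterMeasure {z | d z (f X) ≤ a}

/-!
Split the size-`s` subsets `H` according to whether they contain the coordinate `j` on which
`x` and `x'` differ. If `j ∈ H` then `C_H(x) = C_H(x')`. If `j ∉ H`, the outputs are `a + B` and
`b + B` with `|a - b| ≤ 1` and `B ~ Bin(s, 1/2)`. On the window `|m - s/2| ≤ c` consecutive
binomial weights differ by a factor at most `1 + β`, and Hoeffding's bound leaves mass at most
`δ/(2q)` outside it, so each such `C_H` is `(log (1 + β), δ/(2q))`-private, `q = 1 - s/n`.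
Sampling `H` amplifies this: pairing every `H ∌ j` with the `s` sets `H - m + j` (each `H' ∋ j`
arises `n - s` times) and averaging gives `(log (1 + qβ), δ/2)`, and `β` is chosen so that
`1 + qβ = exp (q √(32 ln(4/δ)/s))`.
-/

open Finset Real

lemma binom_half_apply (s m : ℕ) :
    binom 2⁻¹ half_le_one s m = ENNReal.ofReal (s.choose m * 2⁻¹ ^ s) := by
  simp only [binom, PMF.map_apply, tsum_fintype]
  rcases lt_or_ge s m with hsm | hms
  · rw [Nat.choose_eq_zero_of_lt hsm, Nat.cast_zero, zero_mul, ENNReal.ofReal_zero]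
    refine sum_eq_zero fun i _ => if_neg ?_
    have := i.isLt
    omega
  · refine (sum_eq_single ⟨m, Nat.lt_succ_of_le hms⟩
      (fun i _ hi => if_neg fun h => hi (Fin.ext h.symm)) (by simp)).trans ?_
    refine (if_pos rfl).trans ((PMF.binomial_apply _ _ _ _).trans ?_)
    simp only [ENNReal.toNNReal_inv, ENNReal.toNNReal_ofNat, ENNReal.coe_inv_two,
      ENNReal.one_sub_inv_two, Fin.val_last, ← pow_add, Nat.add_sub_cancel' hms]
    rw [ENNReal.ofReal_mul (by positivity), ENNReal.ofReal_natCast,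
      ENNReal.ofReal_pow (by norm_num), ENNReal.ofReal_inv_of_pos (by norm_num), mul_comm]
    simp

lemma sum_choose_mul_exp_eq_cosh_pow (s : ℕ) (t : ℝ) :
    ∑ m ∈ range (s + 1), (s.choose m : ℝ) * 2⁻¹ ^ s * exp (t * (m - s / 2)) =
      cosh (t / 2) ^ s := by
  rw [cosh_eq, add_div, add_pow]
  refine sum_congr rfl fun m hm => ?_
  have hms : m ≤ s := Nat.lt_succ_iff.mp (mem_range.mp hm)
  rw [div_pow, div_pow, ← exp_nat_mul, ← exp_nat_mul, Nat.cast_sub hms,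
    show t * (m - s / 2) = m * (t / 2) + (s - m) * -(t / 2) by ring, exp_add,
    show (2 : ℝ)⁻¹ ^ s = (2 ^ m)⁻¹ * (2 ^ (s - m))⁻¹ by
      rw [← mul_inv, ← pow_add, Nat.add_sub_cancel' hms, inv_pow]]
  field_simp

lemma sum_choose_far_from_half_le (s : ℕ) (c : ℝ) {t : ℝ} (ht : 0 ≤ t) :
    ∑ m ∈ range (s + 1) with c < |((m : ℕ) : ℝ) - s / 2|, (s.choose m : ℝ) * 2⁻¹ ^ s ≤
      2 * exp (s * t ^ 2 / 8 - t * c) := by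
  set p : ℕ → ℝ := fun m => (s.choose m : ℝ) * 2⁻¹ ^ s
  set g : ℕ → ℝ := fun m => p m * exp (t * (m - s / 2)) + p m * exp (-t * (m - s / 2))
  have markov : ∀ m : ℕ, c < |(m : ℝ) - s / 2| → p m ≤ exp (-(t * c)) * g m := by
    intro m hm
    have key : 1 ≤ exp (t * (m - s / 2) - t * c) + exp (-t * (m - s / 2) - t * c) := by
      rcases abs_cases ((m : ℝ) - s / 2) with ⟨h, -⟩ | ⟨h, -⟩ <;> rw [h] at hm
      · nlinarith [one_le_exp (show 0 ≤ t * (m - s / 2) - t * c by nlinarith),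
          exp_pos (-t * (m - s / 2) - t * c)]
      · nlinarith [one_le_exp (show 0 ≤ -t * (m - s / 2) - t * c by nlinarith),
          exp_pos (t * (m - s / 2) - t * c)]
    calc p m ≤ p m * (exp (t * (m - s / 2) - t * c) + exp (-t * (m - s / 2) - t * c)) :=
          le_mul_of_one_le_right (by positivity) key
      _ = _ := by simp only [g, sub_eq_add_neg, exp_add]; ring
  calc ∑ m ∈ range (s + 1) with c < |((m : ℕ) : ℝ) - s / 2|, p m
      ≤ ∑ m ∈ range (s + 1) with c < |((m : ℕ) : ℝ) - s / 2|, exp (-(t * c)) * g m :=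
        sum_le_sum fun m hm => markov m (mem_filter.mp hm).2
    _ ≤ ∑ m ∈ range (s + 1), exp (-(t * c)) * g m :=
        sum_le_sum_of_subset_of_nonneg (filter_subset _ _) fun m _ _ => by positivity
    _ = 2 * exp (-(t * c)) * cosh (t / 2) ^ s := by
        rw [← mul_sum, sum_add_distrib, sum_choose_mul_exp_eq_cosh_pow,
          sum_choose_mul_exp_eq_cosh_pow, neg_div, cosh_neg]
        ring
    _ ≤ 2 * exp (-(t * c)) * exp ((t / 2) ^ 2 / 2) ^ s := by
        gcongr
        exact cosh_le_exp_half_sq _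
    _ = 2 * exp (s * t ^ 2 / 8 - t * c) := by
        rw [mul_assoc, ← exp_nat_mul, ← exp_add]
        ring_nf

lemma binom_half_tail_le {s : ℕ} (hs : 0 < s) {c : ℝ} (hc : 0 ≤ c) :
    (binom 2⁻¹ half_le_one s).toOuterMeasure {m | c < |(m : ℝ) - s / 2|} ≤
      ENNReal.ofReal (2 * exp (-(2 * c ^ 2 / s))) := by
  have hsupp : ∀ m ∉ range (s + 1),
      {m : ℕ | c < |(m : ℝ) - s / 2|}.indicator (binom 2⁻¹ half_le_one s) m = 0 := by
    intro m hm
    rw [mem_range, not_lt] at hm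
    simp [binom_half_apply, Nat.choose_eq_zero_of_lt (Nat.lt_of_succ_le hm)]
  rw [PMF.toOuterMeasure_apply, tsum_eq_sum hsupp]
  simp only [Set.indicator_apply, Set.mem_ofPred_eq, binom_half_apply]
  rw [← sum_filter, ← ENNReal.ofReal_sum_of_nonneg fun m _ => by positivity]
  refine ENNReal.ofReal_le_ofReal
    ((sum_choose_far_from_half_le s c (t := 4 * c / s) (by positivity)).trans_eq ?_)
  congr 2
  field_simp
  ring

lemma choose_le_mul_choose_succ {s m : ℕ} {γ : ℝ} (hγ : 0 ≤ γ)
    (h : (m + 1 : ℝ) ≤ γ * (s - m)) : (s.choose m : ℝ) ≤ γ * s.choose (m + 1) := by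
  have hms : m < s := by
    by_contra! hsm
    nlinarith [show (s : ℝ) ≤ m by exact_mod_cast hsm]
  have hrec : (s.choose (m + 1) : ℝ) * (m + 1) = s.choose m * (s - m) := by
    have := congrArg (Nat.cast (R := ℝ)) (Nat.choose_succ_right_eq s m)
    push_cast [Nat.cast_sub hms.le] at this
    exact this
  refine le_of_mul_le_mul_right ?_ (by positivity : (0 : ℝ) < m + 1)
  calc (s.choose m : ℝ) * (m + 1) ≤ s.choose m * (γ * (s - m)) := by gcongr
    _ = γ * s.choose (m + 1) * (m + 1) := by rw [mul_assoc, hrec]; ring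

lemma choose_le_mul_choose_pred {s m : ℕ} {γ : ℝ} (hγ : 0 ≤ γ)
    (h : (s - m + 1 : ℝ) ≤ γ * m) : (s.choose m : ℝ) ≤ γ * s.choose (m - 1) := by
  rcases lt_or_ge s m with hsm | hms
  · rw [Nat.choose_eq_zero_of_lt hsm, Nat.cast_zero]
    positivity
  have hm : 1 ≤ m := by
    by_contra! hm0
    simp only [Nat.lt_one_iff.mp hm0, CharP.cast_eq_zero, mul_zero] at h
    linarith [(Nat.cast_nonneg s : (0 : ℝ) ≤ s)]
  rw [← Nat.choose_symm hms, ← Nat.choose_symm (by omega : m - 1 ≤ s),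
    show s - (m - 1) = s - m + 1 by omega]
  refine choose_le_mul_choose_succ hγ ?_
  push_cast [Nat.cast_sub hms, Nat.cast_sub (by omega : s - m ≤ s)]
  linarith

lemma toOuterMeasure_le_one {α : Type*} (p : PMF α) (S : Set α) : p.toOuterMeasure S ≤ 1 := by
  rw [PMF.toOuterMeasure_apply, ← p.tsum_coe]
  exact ENNReal.tsum_le_tsum fun x => Set.indicator_le_self _ _ x

lemma toOuterMeasure_preimage_add_le (ν : PMF ℕ) {γ : ℝ≥0∞} (hγ : 1 ≤ γ) {G : Set ℕ}
    (h0 : 0 ∉ G) (hup : ∀ m ∈ G, ν m ≤ γ * ν (m + 1)) (hdown : ∀ m ∈ G, ν m ≤ γ * ν (m - 1))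
    {a b : ℕ} (hab : a ≤ b + 1) (hba : b ≤ a + 1) (W : Set ℕ) :
    ν.toOuterMeasure ((a + ·) ⁻¹' W) ≤
      γ * ν.toOuterMeasure ((b + ·) ⁻¹' W) + ν.toOuterMeasure Gᶜ := by
  set Sa := (a + ·) ⁻¹' W
  set Sb := (b + ·) ⁻¹' W
  have hsplit : ν.toOuterMeasure Sa ≤ ν.toOuterMeasure (Sa ∩ G) + ν.toOuterMeasure Gᶜ :=
    (MeasureTheory.measure_mono fun m hm => by by_cases hG : m ∈ G <;> simp [hm, hG]).trans
      (MeasureTheory.measure_union_le _ _)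
  refine hsplit.trans (add_le_add_left ?_ _)
  simp only [PMF.toOuterMeasure_apply]
  rcases (by omega : a = b ∨ a = b + 1 ∨ b = a + 1) with rfl | rfl | rfl
  · calc ∑' m, (Sa ∩ G).indicator ν m ≤ ∑' m, Sa.indicator ν m :=
          ENNReal.tsum_le_tsum fun m => Set.indicator_le_indicator_of_subset
            Set.inter_subset_left (fun _ => zero_le) m
      _ ≤ γ * ∑' m, Sa.indicator ν m := le_mul_of_one_le_left zero_le hγ
  · calc ∑' m, (Sa ∩ G).indicator ν m ≤ ∑' m, γ * Sb.indicator ν (m + 1) := by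
          refine ENNReal.tsum_le_tsum fun m => ?_
          by_cases hm : m ∈ Sa ∩ G
          · have hm' : m + 1 ∈ Sb := by
              have h := hm.1
              simp only [Sa, Sb, Set.mem_preimage] at h ⊢
              convert h using 1
              omega
            simpa [Set.indicator_of_mem hm, Set.indicator_of_mem hm'] using hup m hm.2
          · simp [Set.indicator_of_notMem hm]
      _ = γ * ∑' m, Sb.indicator ν (m + 1) := ENNReal.tsum_mul_left
      _ ≤ γ * ∑' m, Sb.indicator ν m :=
          mul_le_mul_right (ENNReal.tsum_comp_le_tsum_of_injective (add_left_injective 1) _) γ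
  · calc ∑' m, (Sa ∩ G).indicator ν m = ∑' m, (Sa ∩ G).indicator ν (m + 1) := by
          rw [tsum_eq_zero_add' ENNReal.summable, Set.indicator_of_notMem fun h => h0 h.2,
            zero_add]
      _ ≤ ∑' m, γ * Sb.indicator ν m := by
          refine ENNReal.tsum_le_tsum fun m => ?_
          by_cases hm : m + 1 ∈ Sa ∩ G
          · have hm' : m ∈ Sb := by
              have h := hm.1
              simp only [Sa, Sb, Set.mem_preimage] at h ⊢
              convert h using 1
              omega
            simpa [Set.indicator_of_mem hm, Set.indicator_of_mem hm'] using hdown (m + 1) hm.2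
          · simp [Set.indicator_of_notMem hm]
      _ = γ * ∑' m, Sb.indicator ν m := ENNReal.tsum_mul_left

lemma binom_half_shift_le {s : ℕ} {c γ : ℝ} (hγ : 1 ≤ γ)
    (hc : s / 2 + c + 1 ≤ γ * (s / 2 - c)) {a b : ℕ} (hab : a ≤ b + 1) (hba : b ≤ a + 1)
    (W : Set ℕ) :
    (binom 2⁻¹ half_le_one s).toOuterMeasure ((a + ·) ⁻¹' W) ≤
      ENNReal.ofReal γ * (binom 2⁻¹ half_le_one s).toOuterMeasure ((b + ·) ⁻¹' W) +
        (binom 2⁻¹ half_le_one s).toOuterMeasure {m : ℕ | c < |(m : ℝ) - s / 2|} := by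
  have hG : {m : ℕ | |(m : ℝ) - s / 2| ≤ c}ᶜ = {m : ℕ | c < |(m : ℝ) - s / 2|} := by
    ext m
    simp
  have hratio : ∀ {m m' : ℕ}, (s.choose m : ℝ) ≤ γ * s.choose m' →
      binom 2⁻¹ half_le_one s m ≤ ENNReal.ofReal γ * binom 2⁻¹ half_le_one s m' := by
    intro m m' h
    rw [binom_half_apply, binom_half_apply, ← ENNReal.ofReal_mul (by linarith)]
    exact ENNReal.ofReal_le_ofReal (by nlinarith [pow_pos (by norm_num : (0 : ℝ) < 2⁻¹) s])
  rw [← hG]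
  refine toOuterMeasure_preimage_add_le _ (by simpa using hγ) ?_ ?_ ?_ hab hba W
  · intro (h0 : |((0 : ℕ) : ℝ) - s / 2| ≤ c)
    have := (abs_le.mp h0).1
    push_cast at this
    nlinarith [(Nat.cast_nonneg s : (0 : ℝ) ≤ s)]
  · intro m (hm : |(m : ℝ) - s / 2| ≤ c)
    have := abs_le.mp hm
    exact hratio (choose_le_mul_choose_succ (by linarith) (by nlinarith))
  · intro m (hm : |(m : ℝ) - s / 2| ≤ c)
    have := abs_le.mp hm
    exact hratio (choose_le_mul_choose_pred (by linarith) (by nlinarith))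

lemma two_mul_add_two_div_le_expm1_div_mul {q s u w : ℝ} (hq0 : 0 < q)
    (hs : 0 < s) (hw : 0 ≤ w) (hwu : w ≤ u) (hu : u < 1 / 2) (hsu : 2 / s ≤ u ^ 2)
    (hgap : s * (u ^ 2 - w ^ 2) = -2 * log q) :
    2 * w + 2 / s ≤ (exp (4 * q * u) - 1) / q * (1 - w) := by
  have hu0 : 0 ≤ u := hw.trans hwu
  rcases le_or_gt (1 / 2) q with hq | hq
  · have hβ : 4 * u + 4 * u ^ 2 ≤ (exp (4 * q * u) - 1) / q := by
      rw [le_div_iff₀ hq0]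
      nlinarith [quadratic_le_exp_of_nonneg (by positivity : 0 ≤ 4 * q * u)]
    calc 2 * w + 2 / s ≤ (4 * u + 4 * u ^ 2) * (1 - u) := by nlinarith
      _ ≤ (4 * u + 4 * u ^ 2) * (1 - w) := by gcongr
      _ ≤ _ := by gcongr; linarith
  · -- for small `q` the window shrinks: `u - w > 1 / s` since `-2 log q > 2 log 2 > 1`
    have hβ : 4 * u ≤ (exp (4 * q * u) - 1) / q := by
      rw [le_div_iff₀ hq0]
      nlinarith [add_one_le_exp (4 * q * u)]
    have hlog : log q < -log 2 := by
      rw [← log_inv, ← one_div]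
      exact log_lt_log hq0 hq
    have hgap' : 1 < s * (u - w) := by
      nlinarith [log_two_gt_d9, mul_le_mul_of_nonneg_left (by linarith : u + w ≤ 1)
        (mul_nonneg hs.le (sub_nonneg.mpr hwu))]
    have : 2 / s < 2 * (u - w) := by
      rw [div_lt_iff₀ hs]
      linarith
    calc 2 * w + 2 / s ≤ 4 * u * (1 - u) := by nlinarith
      _ ≤ 4 * u * (1 - w) := by gcongr
      _ ≤ _ := by gcongr; linarith

lemma binom_half_shift_le_of_log {s : ℕ} {δ q : ℝ} (hδ0 : 0 < δ) (hδ1 : δ ≤ 1) (hq0 : 0 < q)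
    (hq1 : q ≤ 1) (hs : 8 * log (4 / δ) < s) {a b : ℕ} (hab : a ≤ b + 1) (hba : b ≤ a + 1)
    (W : Set ℕ) :
    (binom 2⁻¹ half_le_one s).toOuterMeasure ((a + ·) ⁻¹' W) ≤
      ENNReal.ofReal (1 + (exp (√(32 * log (4 / δ) / s) * q) - 1) / q) *
        (binom 2⁻¹ half_le_one s).toOuterMeasure ((b + ·) ⁻¹' W) +
      ENNReal.ofReal (δ / (2 * q)) := by
  set L := log (4 / δ)
  have hL : 1 ≤ L := by
    rw [le_log_iff_exp_le (by positivity), le_div_iff₀ hδ0]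
    nlinarith [exp_one_lt_d9]
  have hs0 : (0 : ℝ) < s := by linarith
  by_cases hqδ : q ≤ δ / 2
  · refine le_add_left ((toOuterMeasure_le_one _ _).trans ?_)
    rw [← ENNReal.ofReal_one]
    exact ENNReal.ofReal_le_ofReal (by rw [le_div_iff₀ (by positivity)]; linarith)
  push Not at hqδ
  have hLq : 0 < L + log q := by
    have : L + log (δ / 2) = log 2 := by
      rw [← log_mul (by positivity) (by positivity)]
      field_simp
      norm_num
    linarith [log_lt_log (by positivity) hqδ, log_pos (by norm_num : (1 : ℝ) < 2)]
  -- the window half-width `s w / 2` makes the Hoeffding tail `2 exp (-s w² / 2)` equal `δ/(2q)`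
  set u := √(2 * L / s)
  set w := √(2 * (L + log q) / s)
  have hu2 : u ^ 2 = 2 * L / s := sq_sqrt (by positivity)
  have hw2 : w ^ 2 = 2 * (L + log q) / s := sq_sqrt (by positivity)
  have hwu : w ≤ u := sqrt_le_sqrt (by gcongr; linarith [log_nonpos hq0.le hq1])
  have hu : u < 1 / 2 := by
    rw [sqrt_lt' (by norm_num), div_lt_iff₀ hs0]
    linarith
  have hsu : 2 / s ≤ u ^ 2 := by rw [hu2]; gcongr; linarith
  have key := two_mul_add_two_div_le_expm1_div_mul hq0 hs0 (sqrt_nonneg _) hwu hu hsu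
    (by rw [hu2, hw2]; field_simp; ring)
  have hε : √(32 * L / s) = 4 * u := by
    rw [show 32 * L / s = 4 ^ 2 * (2 * L / s) by ring, sqrt_mul (by positivity),
      sqrt_sq (by norm_num)]
  set β := (exp (4 * q * u) - 1) / q
  have hβ : 0 ≤ β := div_nonneg (sub_nonneg.mpr (one_le_exp (by positivity))) hq0.le
  rw [hε, show 4 * u * q = 4 * q * u by ring]
  refine (binom_half_shift_le (c := s * w / 2) (γ := 1 + β) (by linarith) ?_ hab hba W).trans
    (add_le_add_right ((binom_half_tail_le (c := s * w / 2) (by exact_mod_cast hs0)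
      (by positivity)).trans_eq ?_) _)
  · have hs2 : (s : ℝ) * (2 / s) = 2 := by field_simp
    nlinarith [mul_le_mul_of_nonneg_left key (by positivity : (0 : ℝ) ≤ s / 2)]
  · have : 2 * (s * w / 2) ^ 2 / s = L + log q := by
      rw [show 2 * (s * w / 2) ^ 2 / s = s * w ^ 2 / 2 by field_simp, hw2]
      field_simp
    rw [this, neg_add, exp_add, exp_neg, exp_neg, exp_log hq0, exp_log (by positivity)]
    congr 1
    field_simp
    ring

lemma add_le_of_le_of_natCast_mul_le {A B B' D : ℝ≥0∞} {β : ℝ} {s N : ℕ} (hβ : 0 ≤ β)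
    (hN : 0 < N) (hsN : s ≤ N) (h1 : B ≤ ENNReal.ofReal (1 + β) * B' + D)
    (h2 : s * B ≤ ENNReal.ofReal (1 + β) * ((N - s : ℕ) * A) + s * D) :
    A + B ≤ ENNReal.ofReal (1 + (1 - s / N) * β) * (A + B') + D := by
  have hNr : (0 : ℝ) < N := by exact_mod_cast hN
  have hsNr : (s : ℝ) / N ≤ 1 := by
    rw [div_le_one hNr]
    exact_mod_cast hsN
  set q : ℝ := 1 - s / N
  -- bound `(1 - α) B` by `h1` and `α B` by `h2`; this `α` makes the coefficients of `B'` and `A`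
  -- come out as `1 + qβ` and `qβ`
  set α : ℝ := s / N * (β / (1 + β))
  have hα1 : α ≤ 1 :=
    mul_le_one₀ hsNr (by positivity) (by rw [div_le_one (by linarith)]; linarith)
  have hone : ENNReal.ofReal (1 - α) + ENNReal.ofReal α = 1 := by
    rw [← ENNReal.ofReal_add (by linarith) (by positivity), sub_add_cancel, ENNReal.ofReal_one]
  have hfar : ENNReal.ofReal α * B ≤ ENNReal.ofReal (q * β) * A + ENNReal.ofReal α * D := by
    have hcoef : ENNReal.ofReal α = ENNReal.ofReal (β / (1 + β) / N) * s := by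
      rw [← ENNReal.ofReal_natCast s, ← ENNReal.ofReal_mul (by positivity)]
      congr 1
      simp only [α]
      field_simp
    calc ENNReal.ofReal α * B = ENNReal.ofReal (β / (1 + β) / N) * (s * B) := by
          rw [hcoef, mul_assoc]
      _ ≤ ENNReal.ofReal (β / (1 + β) / N) *
            (ENNReal.ofReal (1 + β) * ((N - s : ℕ) * A) + s * D) := by gcongr
      _ = ENNReal.ofReal (β / (1 + β) / N * (1 + β) * (N - s : ℕ)) * A +
            ENNReal.ofReal α * D := by
          rw [hcoef, ENNReal.ofReal_mul (by positivity), ENNReal.ofReal_mul (by positivity),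
            ENNReal.ofReal_natCast]
          ring
      _ = ENNReal.ofReal (q * β) * A + ENNReal.ofReal α * D := by
          congr 3
          push_cast [Nat.cast_sub hsN]
          simp only [q]
          field_simp
  have hnear : ENNReal.ofReal (1 - α) * B ≤
      ENNReal.ofReal (1 + q * β) * B' + ENNReal.ofReal (1 - α) * D := by
    calc ENNReal.ofReal (1 - α) * B ≤
          ENNReal.ofReal (1 - α) * (ENNReal.ofReal (1 + β) * B' + D) := by gcongr
      _ = ENNReal.ofReal ((1 - α) * (1 + β)) * B' + ENNReal.ofReal (1 - α) * D := by
          rw [ENNReal.ofReal_mul (by linarith)]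
          ring
      _ = ENNReal.ofReal (1 + q * β) * B' + ENNReal.ofReal (1 - α) * D := by
          congr 3
          simp only [q, α]
          field_simp
          ring
  calc A + B = A + (ENNReal.ofReal (1 - α) * B + ENNReal.ofReal α * B) := by
        rw [← add_mul, hone, one_mul]
    _ ≤ A + (ENNReal.ofReal (1 + q * β) * B' + ENNReal.ofReal (1 - α) * D +
        (ENNReal.ofReal (q * β) * A + ENNReal.ofReal α * D)) := by gcongr
    _ = (1 + ENNReal.ofReal (q * β)) * A + ENNReal.ofReal (1 + q * β) * B' +
        (ENNReal.ofReal (1 - α) + ENNReal.ofReal α) * D := by ring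
    _ = ENNReal.ofReal (1 + q * β) * (A + B') + D := by
        rw [hone, ENNReal.ofReal_add zero_le_one (by positivity), ENNReal.ofReal_one]
        ring

section Subsampling

variable {ι : Type*} [Fintype ι] [DecidableEq ι]

lemma card_filter_notMem_powersetCard_mul (s : ℕ) (j : ι) :
    #((powersetCard s univ).filter (j ∉ ·)) * Fintype.card ι =
      (Fintype.card ι - s) * #(powersetCard s (univ : Finset ι)) := by
  have hfilter : (powersetCard s univ).filter (j ∉ ·) = powersetCard s (univ.erase j) := by
    ext H
    simp [mem_powersetCard, subset_erase, and_comm]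
  obtain ⟨N, hN⟩ : ∃ N, Fintype.card ι = N + 1 :=
    Nat.exists_eq_succ_of_ne_zero (Fintype.card_pos_iff.mpr ⟨j⟩).ne'
  rw [hfilter, card_powersetCard, card_powersetCard, card_erase_of_mem (mem_univ j), card_univ,
    hN, Nat.add_sub_cancel, Nat.choose_mul_succ_eq, mul_comm]

lemma sum_sum_insert_erase {M : Type*} [AddCommMonoid M] (s : ℕ) (j : ι) (G : Finset ι → M) :
    ∑ H ∈ (powersetCard s univ).filter (j ∉ ·), ∑ m ∈ H, G (insert j (H.erase m)) =
      ∑ H ∈ (powersetCard s univ).filter (j ∈ ·), (Fintype.card ι - s) • G H := by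
  have hcompl : ∀ H ∈ (powersetCard s univ).filter (j ∈ ·), ∑ _i ∈ Hᶜ, G H =
      (Fintype.card ι - s) • G H := fun H hH => by
    rw [sum_const, card_compl, (mem_powersetCard.mp (mem_filter.mp hH).1).2]
  rw [← sum_congr rfl hcompl, sum_sigma', sum_sigma']
  refine sum_nbij' (fun p => ⟨insert j (p.1.erase p.2), p.2⟩)
    (fun p => ⟨insert p.2 (p.1.erase j), p.2⟩) ?_ ?_ ?_ ?_ fun _ _ => rfl
  all_goals rintro ⟨H, m⟩ hp
  all_goals simp only [mem_sigma, mem_filter, mem_powersetCard, mem_compl] at hp ⊢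
  all_goals grind [card_insert_of_notMem, card_erase_of_mem, erase_insert, insert_erase]

theorem avg_powersetCard_le_of_swap {s : ℕ} (hs : s ≤ Fintype.card ι) (j : ι)
    {F F' : Finset ι → ℝ≥0∞} {β δ : ℝ} (hβ : 0 ≤ β)
    (hin : ∀ H ∈ powersetCard s univ, j ∈ H → F H = F' H)
    (hswap : ∀ H ∈ powersetCard s univ, ∀ H' ∈ powersetCard s univ, ∀ k ∉ H', j ∉ H →
      insert j H = insert k H' → F H ≤ ENNReal.ofReal (1 + β) * F' H' + ENNReal.ofReal δ) :
    (#(powersetCard s (univ : Finset ι)) : ℝ≥0∞)⁻¹ * ∑ H ∈ powersetCard s univ, F H ≤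
      ENNReal.ofReal (1 + (1 - s / Fintype.card ι) * β) *
        ((#(powersetCard s (univ : Finset ι)) : ℝ≥0∞)⁻¹ * ∑ H ∈ powersetCard s univ, F' H) +
      ENNReal.ofReal ((1 - s / Fintype.card ι) * δ) := by
  set N := Fintype.card ι
  set P := powersetCard s (univ : Finset ι)
  set P0 := P.filter (j ∉ ·)
  set P1 := P.filter (j ∈ ·)
  have hcard : ∀ H ∈ P, #H = s := fun H hH => (mem_powersetCard.mp hH).2
  have hsplit : ∀ G : Finset ι → ℝ≥0∞, ∑ H ∈ P, G H = ∑ H ∈ P1, G H + ∑ H ∈ P0, G H :=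
    fun G => (sum_filter_add_sum_filter_not P (j ∈ ·) G).symm
  have hA : ∑ H ∈ P1, F H = ∑ H ∈ P1, F' H :=
    sum_congr rfl fun H hH => hin H (mem_filter.mp hH).1 (mem_filter.mp hH).2
  have h1 : ∑ H ∈ P0, F H ≤
      ENNReal.ofReal (1 + β) * ∑ H ∈ P0, F' H + #P0 * ENNReal.ofReal δ := by
    rw [mul_sum, ← nsmul_eq_mul, ← sum_const, ← sum_add_distrib]
    refine sum_le_sum fun H hH => ?_
    have hH := mem_filter.mp hH
    exact hswap H hH.1 H hH.1 j hH.2 hH.2 rfl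
  have h2 : s * ∑ H ∈ P0, F H ≤ ENNReal.ofReal (1 + β) * ((N - s : ℕ) * ∑ H ∈ P1, F' H) +
      s * (#P0 * ENNReal.ofReal δ) := by
    calc s * ∑ H ∈ P0, F H = ∑ H ∈ P0, ∑ _m ∈ H, F H := by
          rw [mul_sum]
          refine sum_congr rfl fun H hH => ?_
          rw [sum_const, hcard H (mem_filter.mp hH).1, nsmul_eq_mul]
      _ ≤ ∑ H ∈ P0, ∑ m ∈ H,
            (ENNReal.ofReal (1 + β) * F' (insert j (H.erase m)) + ENNReal.ofReal δ) := by
          refine sum_le_sum fun H hH => sum_le_sum fun m hm => ?_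
          have hH := mem_filter.mp hH
          have hmj : m ≠ j := fun h => hH.2 (h ▸ hm)
          refine hswap H hH.1 _ ?_ m (by simp [hmj]) hH.2 ?_
          · grind [card_insert_of_notMem, card_erase_of_mem]
          · rw [insert_comm, insert_erase hm]
      _ = ENNReal.ofReal (1 + β) * ∑ H ∈ P0, ∑ m ∈ H, F' (insert j (H.erase m)) +
            ∑ H ∈ P0, ∑ _m ∈ H, ENNReal.ofReal δ := by
          simp only [sum_add_distrib, mul_sum]
      _ = _ := by
          rw [sum_sum_insert_erase, ← smul_sum, nsmul_eq_mul]
          congr 1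
          rw [sum_congr rfl fun H hH => by rw [sum_const, hcard H (mem_filter.mp hH).1],
            sum_const, nsmul_eq_mul, nsmul_eq_mul, mul_left_comm]
  have hP : (0 : ℝ) < #P := by
    rw [card_powersetCard, card_univ]
    exact_mod_cast Nat.choose_pos hs
  have hratio : (#P0 : ℝ) / #P = 1 - s / N := by
    have hN : (0 : ℝ) < N := by exact_mod_cast Fintype.card_pos_iff.mpr ⟨j⟩
    have : #P0 * N = (N - s) * #P := card_filter_notMem_powersetCard_mul s j
    rw [← Nat.cast_inj (R := ℝ)] at this
    push_cast [Nat.cast_sub hs] at this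
    field_simp
    linarith
  have hδ : (#P : ℝ≥0∞)⁻¹ * (#P0 * ENNReal.ofReal δ) = ENNReal.ofReal ((1 - s / N) * δ) := by
    rw [ENNReal.ofReal_mul (by rw [← hratio]; positivity), ← hratio,
      ENNReal.ofReal_div_of_pos hP, ENNReal.ofReal_natCast, ENNReal.ofReal_natCast,
      div_eq_mul_inv]
    ring
  rw [hsplit F, hsplit F', hA, ← hδ, mul_left_comm, ← mul_add]
  exact mul_le_mul_right
    (add_le_of_le_of_natCast_mul_le hβ (Fintype.card_pos_iff.mpr ⟨j⟩) hs h1 h2) _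

end Subsampling

lemma Cs_toOuterMeasure_apply {n s : ℕ} (hs : s ≤ n) (x : Fin n → Bool) (W : Set ℕ) :
    (Cs n s x).toOuterMeasure W = (#(powersetCard s (univ : Finset (Fin n))) : ℝ≥0∞)⁻¹ *
      ∑ H ∈ powersetCard s univ, (CH n H x).toOuterMeasure W := by
  have hne : (powersetCard s (univ : Finset (Fin n))).Nonempty :=
    powersetCard_nonempty.mpr (by simpa using hs)
  rw [Cs, uniformSubset, dif_pos hne, PMF.toOuterMeasure_bind_apply,
    tsum_eq_sum fun H hH => by rw [PMF.uniformOfFinset_apply_of_notMem hne hH, zero_mul],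
    mul_sum]
  exact sum_congr rfl fun H hH => by rw [PMF.uniformOfFinset_apply_of_mem hne hH]

section Neighbor

variable {n : ℕ} {x x' : Fin n → Bool} {j : Fin n}

lemma sumOutside_eq_of_mem (hx : ∀ i, i ≠ j → x i = x' i) {H : Finset (Fin n)} (hj : j ∈ H) :
    sumOutside H x = sumOutside H x' :=
  sum_congr rfl fun i hi => by rw [hx i fun h => mem_compl.mp hi (h ▸ hj)]

lemma sumOutside_le_add_one (hx : ∀ i, i ≠ j → x i = x' i) {H H' : Finset (Fin n)}
    {k : Fin n} (hj : j ∉ H) (hk : k ∉ H') (hH : insert j H = insert k H') :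
    sumOutside H x ≤ sumOutside H' x' + 1 ∧ sumOutside H' x' ≤ sumOutside H x + 1 := by
  have hrest : ∑ i ∈ H'ᶜ.erase k, (if x' i then 1 else 0) =
      ∑ i ∈ Hᶜ.erase j, (if x i then 1 else 0) := by
    rw [← compl_insert, ← compl_insert, hH]
    exact sum_congr rfl fun i hi => by
      rw [hx i fun h => (mem_compl.mp hi) (h ▸ hH ▸ mem_insert_self j H)]
  unfold sumOutside
  rw [← add_sum_erase _ _ (mem_compl.mpr hj), ← add_sum_erase _ _ (mem_compl.mpr hk), hrest]
  constructor <;> split_ifs <;> omega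

lemma CH_toOuterMeasure_le (hx : ∀ i, i ≠ j → x i = x' i) {H H' : Finset (Fin n)} {k : Fin n}
    (hj : j ∉ H) (hk : k ∉ H') (hH : insert j H = insert k H') {s : ℕ} (hHs : #H = s)
    (hH's : #H' = s) {δ : ℝ} (hδ0 : 0 < δ) (hδ1 : δ ≤ 1) (hs : 8 * log (4 / δ) < s)
    (W : Set ℕ) :
    (CH n H x).toOuterMeasure W ≤
      ENNReal.ofReal (1 + (exp (√(32 * log (4 / δ) / s) * (1 - s / n)) - 1) / (1 - s / n)) *
        (CH n H' x').toOuterMeasure W + ENNReal.ofReal (δ / (2 * (1 - s / n))) := by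
  have hsn : s < n := by simpa [hHs] using card_lt_univ_of_notMem hj
  have hq0 : (0 : ℝ) < 1 - s / n :=
    sub_pos.mpr ((div_lt_one (by exact_mod_cast s.zero_le.trans_lt hsn)).mpr
      (by exact_mod_cast hsn))
  obtain ⟨hab, hba⟩ := sumOutside_le_add_one hx hj hk hH
  simp only [CH, PMF.toOuterMeasure_map_apply, hHs, hH's]
  exact binom_half_shift_le_of_log hδ0 hδ1 hq0 (sub_le_self _ (by positivity)) hs hab hba W

end Neighbor

/-- for `8 ln(4/δ) < s ≤ n`, the mechanism `C_s` is
`(√(32 ln(4/δ)/s) · (1 - s/n), δ/2)`-DP. -/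
theorem stmt4 (n : ℕ) (del : ℝ) (hdel : del ∈ Set.Ioo (0 : ℝ) 1) (s : ℕ)
    (hs1 : 8 * Real.log (4 / del) < (s : ℝ)) (hs2 : s ≤ n) :
    ∀ x x' : Fin n → Bool, Neighbor x x' → ∀ W : Set ℕ,
      (Cs n s x).toOuterMeasure W ≤
        ENNReal.ofReal
            (Real.exp (Real.sqrt (32 * Real.log (4 / del) / s) * (1 - (s : ℝ) / n))) *
          (Cs n s x').toOuterMeasure W + ENNReal.ofReal (del / 2) := by
  rintro x x' ⟨j, hj⟩ W
  set ε := √(32 * log (4 / del) / s)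
  set q : ℝ := 1 - s / n
  have hq : 0 ≤ q := sub_nonneg.mpr (div_le_one_of_le₀ (by exact_mod_cast hs2) n.cast_nonneg)
  have hβ : 0 ≤ (exp (ε * q) - 1) / q :=
    div_nonneg (sub_nonneg.mpr (one_le_exp (mul_nonneg (sqrt_nonneg _) hq))) hq
  have hcoef : 1 + q * ((exp (ε * q) - 1) / q) = exp (ε * q) := by
    rcases eq_or_ne q 0 with h | h
    · simp [h]
    · rw [mul_div_cancel₀ _ h, add_sub_cancel]
  have hδ : q * (del / (2 * q)) ≤ del / 2 := by
    rcases eq_or_ne q 0 with h | h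
    · rw [h, zero_mul]
      linarith [hdel.1]
    · exact (by field_simp : q * (del / (2 * q)) = del / 2).le
  rw [Cs_toOuterMeasure_apply hs2, Cs_toOuterMeasure_apply hs2]
  refine (avg_powersetCard_le_of_swap (by simpa using hs2) j
    (F' := fun H => (CH n H x').toOuterMeasure W) (δ := del / (2 * q)) hβ ?_ ?_).trans ?_
  · intro H _ hjH
    simp only [CH, sumOutside_eq_of_mem hj hjH]
  · exact fun H hH H' hH' k hk hjH hHH' => CH_toOuterMeasure_le hj hjH hk hHH'
      (mem_powersetCard.mp hH).2 (mem_powersetCard.mp hH').2 hdel.1 hdel.2.le hs1 W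
  · rw [Fintype.card_fin, hcoef]
    gcongr

end ShuffledDP
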